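/- Let r ≤ 0 and θ be real numbers and t ∈ [0,1]. Then |1 - e^{(r+iθ)t}|² ≤ (r² + θ²)·t², where e^{(r+iθ)t} is the complex exponential. -/

import Mathlib

/-!
The map `exp` has derivative `exp w` with `‖exp w‖ = e ^ (re w) ≤ 1` on the convex half-plane
`re w ≤ 0`, so by the mean value inequality it is `1`-Lipschitz there; compare `exp z` with `exp 0`.
-/

open Complex

theorem Complex.norm_one_sub_exp_le_of_re_nonpos {z : ℂ} (hz : z.re ≤ 0) :
    ‖1 - exp z‖ ≤ ‖z‖ := by
  have hlip := (convex_halfSpace_re_le (0 : ℝ)).norm_image_sub_le_of_norm_deriv_le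
    (f := exp) (C := 1) (fun w _ => differentiableAt_exp)
    (fun w hw => by rw [Complex.deriv_exp, norm_exp]; exact Real.exp_le_one_iff.mpr hw)
    (show (0 : ℂ) ∈ {c : ℂ | c.re ≤ 0} by simp) hz
  rwa [exp_zero, one_mul, sub_zero, norm_sub_rev] at hlip

theorem stmt_2_general (r θ t : ℝ) (hr : r ≤ 0) (ht0 : 0 ≤ t) :
    ‖1 - Complex.exp ((r + θ * Complex.I) * t)‖ ^ 2 ≤ (r ^ 2 + θ ^ 2) * t ^ 2 := by
  set z : ℂ := (r + θ * Complex.I) * t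
  have hre : z.re ≤ 0 := by simpa [z] using mul_nonpos_of_nonpos_of_nonneg hr ht0
  have hnorm : ‖z‖ ^ 2 = (r ^ 2 + θ ^ 2) * t ^ 2 := by
    rw [Complex.sq_norm, Complex.normSq_apply]
    simp only [z, mul_re, mul_im, add_re, add_im, ofReal_re, ofReal_im, I_re, I_im]
    ring
  rw [← hnorm]
  gcongr
  exact norm_one_sub_exp_le_of_re_nonpos hre

theorem stmt_2 (r θ t : ℝ) (hr : r ≤ 0) (ht0 : 0 ≤ t) (ht1 : t ≤ 1) :
    ‖1 - Complex.exp ((r + θ * Complex.I) * t)‖ ^ 2 ≤ (r ^ 2 + θ ^ 2) * t ^ 2 :=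
  stmt_2_general r θ t hr ht0
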